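/- arXiv:1807.01132 — 3 statements merged into one kernel-verified Lean document; each statement's English description precedes it below -/
import Mathlib

section
/- Let X = (X_1,…,X_n) be the occupancy vector of ⌊θn⌋ balls thrown independently uniformly into n bins with θ ∈ [0,1], assuming the Poisson comparison inequality P(X ∈ S) ≤ 2P(Y ∈ S) for monotone sets S with Y i.i.d. Poisson(θ). Then for any a ∈ {1,…,⌊θn⌋} and S ⊆ {1,…,n}: P(max_{m∈S} X_m < a) ≤ 2 exp(−θ^a |S| / (e·a!)). -/
open MeasureTheory ProbabilityTheory Real

/-! The event `max_{m ∈ S} x_m < a` is a down-set, so the comparison hypothesis replaces `X`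
by the independent Poisson vector `Y` at the cost of a factor 2. Each bin of `Y` stays below `a`
with probability at most `1 - P(Y_m = a) ≤ exp (-e^{-θ} θ^a / a!)`, and `e^{-θ} ≥ e^{-1}` because
`θ ≤ 1`; independence multiplies these bounds over `S`. -/

lemma pow_div_exp_one_mul_factorial_le {θ : ℝ} (hθ0 : 0 ≤ θ) (hθ1 : θ ≤ 1) (a : ℕ) :
    θ ^ a / (exp 1 * a.factorial) ≤ exp (-θ) * θ ^ a / a.factorial :=
  calc θ ^ a / (exp 1 * a.factorial) = exp (-1) * θ ^ a / a.factorial := by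
        rw [exp_neg]; field_simp
    _ ≤ exp (-θ) * θ ^ a / a.factorial := by gcongr

lemma measure_lt_le_ofReal_exp_neg {Ω α : Type*} [MeasurableSpace Ω] {μ : Measure Ω}
    [IsProbabilityMeasure μ] [MeasurableSpace α] [MeasurableSingletonClass α] [Preorder α]
    {Z : Ω → α} (hZ : Measurable Z) {a : α} {q : ℝ} (hq : 0 ≤ q)
    (hZa : μ {ω | Z ω = a} = ENNReal.ofReal q) :
    μ {ω | Z ω < a} ≤ ENNReal.ofReal (exp (-q)) :=
  calc μ {ω | Z ω < a} ≤ μ {ω | Z ω = a}ᶜ := measure_mono fun _ h => ne_of_lt h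
    _ = ENNReal.ofReal (1 - q) := by
        rw [prob_compl_eq_one_sub (s := {ω | Z ω = a}) (hZ (measurableSet_singleton a)), hZa,
          ENNReal.ofReal_sub 1 hq, ENNReal.ofReal_one]
    _ ≤ ENNReal.ofReal (exp (-q)) := ENNReal.ofReal_le_ofReal (one_sub_le_exp_neg q)

lemma ProbabilityTheory.iIndepFun.measure_forall_mem_le_pow {Ω ι β : Type*} [MeasurableSpace Ω] {μ : Measure Ω}
    [MeasurableSpace β] {Y : ι → Ω → β} (hY : iIndepFun Y μ) (S : Finset ι) {B : Set β}
    (hB : MeasurableSet B) {c : ENNReal} (hc : ∀ i ∈ S, μ {ω | Y i ω ∈ B} ≤ c) :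
    μ {ω | ∀ i ∈ S, Y i ω ∈ B} ≤ c ^ S.card :=
  calc μ {ω | ∀ i ∈ S, Y i ω ∈ B} = μ (⋂ i ∈ S, Y i ⁻¹' B) := by
        congr 1; ext; simp
    _ = ∏ i ∈ S, μ (Y i ⁻¹' B) := hY.meas_biInter fun _ _ => ⟨B, hB, rfl⟩
    _ ≤ ∏ _ ∈ S, c := Finset.prod_le_prod' hc
    _ = c ^ S.card := Finset.prod_const c

theorem stmt_12_general {Ω : Type*} [MeasurableSpace Ω] (μ : Measure Ω) [IsProbabilityMeasure μ]
    (n : ℕ) (θ : ℝ) (hθ0 : 0 ≤ θ) (hθ1 : θ ≤ 1)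
    (X Y : Fin n → Ω → ℕ) (hmeas : ∀ i, Measurable (Y i))
    (hindep : iIndepFun Y μ)
    (hY : ∀ i (k : ℕ), μ {ω | Y i ω = k}
      = ENNReal.ofReal (Real.exp (-θ) * θ ^ k / (k.factorial : ℝ)))
    (hcomp : ∀ S : Set (Fin n → ℕ),
      (∀ x ∈ S, ∀ y : Fin n → ℕ, (∀ i, y i ≤ x i) → y ∈ S) →
      μ {ω | (fun m => X m ω) ∈ S} ≤ 2 * μ {ω | (fun m => Y m ω) ∈ S})
    (a : ℕ) (S : Finset (Fin n)) :
    μ {ω | ∀ m ∈ S, X m ω < a}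
      ≤ ENNReal.ofReal
          (2 * Real.exp (-(θ ^ a * (S.card : ℝ) / (Real.exp 1 * (a.factorial : ℝ))))) := by
  set r := θ ^ a / (exp 1 * a.factorial)
  have hbin : ∀ i ∈ S, μ {ω | Y i ω ∈ Set.Iio a} ≤ ENNReal.ofReal (exp (-r)) := fun i _ =>
    (measure_lt_le_ofReal_exp_neg (hmeas i) (by positivity) (hY i a)).trans <|
      ENNReal.ofReal_le_ofReal <| exp_le_exp.2 <| neg_le_neg <|
        pow_div_exp_one_mul_factorial_le hθ0 hθ1 a
  calc μ {ω | ∀ m ∈ S, X m ω < a}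
      ≤ 2 * μ {ω | ∀ m ∈ S, Y m ω < a} :=
        hcomp {x | ∀ m ∈ S, x m < a} fun x hx y hyx m hm => (hyx m).trans_lt (hx m hm)
    _ ≤ 2 * ENNReal.ofReal (exp (-r)) ^ S.card := by
        gcongr; exact hindep.measure_forall_mem_le_pow S measurableSet_Iio hbin
    _ = _ := by
        rw [← ENNReal.ofReal_pow (exp_nonneg _), ← exp_nat_mul, ← ENNReal.ofReal_ofNat 2,
          ← ENNReal.ofReal_mul zero_le_two]
        congr 3; ring

/-- Lemma 2 of the paper: with `X` the occupancy vector of ⌊θn⌋ balls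
in `n` bins satisfying the Poisson comparison inequality against i.i.d. Poisson(θ)
variables `Y`, the probability that all bins of `S` have load below `a` is at most
`2 exp(−θ^a |S| / (e a!))`. -/
theorem stmt_12 {Ω : Type*} [MeasurableSpace Ω] (μ : Measure Ω) [IsProbabilityMeasure μ]
    (n : ℕ) (θ : ℝ) (hθ0 : 0 ≤ θ) (hθ1 : θ ≤ 1)
    (X Y : Fin n → Ω → ℕ) (hmeas : ∀ i, Measurable (Y i))
    (hindep : iIndepFun Y μ)
    (hY : ∀ i (k : ℕ), μ {ω | Y i ω = k}
      = ENNReal.ofReal (Real.exp (-θ) * θ ^ k / (k.factorial : ℝ)))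
    (hcomp : ∀ S : Set (Fin n → ℕ),
      (∀ x ∈ S, ∀ y : Fin n → ℕ, (∀ i, y i ≤ x i) → y ∈ S) →
      μ {ω | (fun m => X m ω) ∈ S} ≤ 2 * μ {ω | (fun m => Y m ω) ∈ S})
    (a : ℕ) (ha1 : 1 ≤ a) (ha2 : a ≤ ⌊θ * n⌋₊) (S : Finset (Fin n)) :
    μ {ω | ∀ m ∈ S, X m ω < a}
      ≤ ENNReal.ofReal
          (2 * Real.exp (-(θ ^ a * (S.card : ℝ) / (Real.exp 1 * (a.factorial : ℝ))))) :=
  stmt_12_general μ n θ hθ0 hθ1 X Y hmeas hindep hY hcomp a S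
end

section
/- Let X = (X_1,…,X_n) be the occupancy vector of ⌊θn⌋ balls thrown independently uniformly into n bins with θ ∈ [0,1], assuming the Poisson comparison inequality for monotone sets with i.i.d. Poisson(θ) variables Y_m. Then for any S ⊆ {1,…,n}: P(|{m ∈ S : X_m > 0}| ≤ θ|S|/(2e)) ≤ 2 exp(−θ²|S|/(2e²)). -/
/-!
The event that few bins of `S` are occupied is monotone decreasing, so the comparison inequality
reduces it, at the cost of a factor 2, to the same event for independent Poisson(θ) counts `Y_m`.
The indicators `1{Y_m > 0}` are independent with mean at least `P(Y_m = 1) = θ e^{-θ} ≥ θ/e`,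
so their sum over `S` has mean at least twice the threshold `θ|S|/(2e)`, and Hoeffding's
inequality with deviation `θ|S|/(2e)` gives the bound `exp(−θ²|S|/(2e²))`.
-/

open MeasureTheory ProbabilityTheory Real Finset

lemma measureReal_sum_le_sub_le_of_iIndepFun {Ω ι : Type*} [MeasurableSpace Ω] {μ : Measure Ω}
    {W : ι → Ω → ℝ} (h_indep : iIndepFun W μ) (h_meas : ∀ i, Measurable (W i)) {a b : ℝ}
    (h_bdd : ∀ i ω, W i ω ∈ Set.Icc a b) (s : Finset ι) {t : ℝ} (ht : 0 ≤ t) :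
    μ.real {ω | ∑ i ∈ s, W i ω ≤ ∑ i ∈ s, μ[W i] - t}
      ≤ exp (-2 * t ^ 2 / (#s * (b - a) ^ 2)) := by
  have := h_indep.isProbabilityMeasure
  have h_subG : ∀ i ∈ s,
      HasSubgaussianMGF (fun ω ↦ μ[W i] - W i ω) ((‖b - a‖₊ / 2) ^ 2) μ := fun i _ => by
    convert (hasSubgaussianMGF_of_mem_Icc (h_meas i).aemeasurable
      (ae_of_all μ (h_bdd i))).neg using 1
    ext ω
    simp
  have h_indep' : iIndepFun (fun i ω ↦ μ[W i] - W i ω) μ :=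
    h_indep.comp (fun i (y : ℝ) => ∫ ω, W i ω ∂μ - y) fun _ => by fun_prop
  calc μ.real {ω | ∑ i ∈ s, W i ω ≤ ∑ i ∈ s, μ[W i] - t}
      ≤ μ.real {ω | t ≤ ∑ i ∈ s, (μ[W i] - W i ω)} := by
        refine measureReal_mono (Set.ofPred_subset_ofPred.2 fun ω hω => ?_)
        rw [sum_sub_distrib]
        linarith
    _ ≤ exp (-t ^ 2 / (2 * ((∑ i ∈ s, (‖b - a‖₊ / 2) ^ 2 : NNReal) : ℝ))) :=
        HasSubgaussianMGF.measure_sum_ge_le_of_iIndepFun h_indep' h_subG ht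
    _ = exp (-2 * t ^ 2 / (#s * (b - a) ^ 2)) := by
        rw [sum_const, nsmul_eq_mul]
        push_cast
        rw [Real.norm_eq_abs, div_pow, sq_abs,
          show 2 * (#s * ((b - a) ^ 2 / 2 ^ 2)) = #s * (b - a) ^ 2 / 2 by ring,
          div_div_eq_mul_div]
        ring_nf

lemma isLowerSet_setOf_card_filter_pos_le {ι : Type*} (S : Finset ι) (c : ℝ) :
    IsLowerSet {x : ι → ℕ | (#(S.filter (0 < x ·)) : ℝ) ≤ c} := by
  intro x y hyx (hx : _ ≤ c)
  refine le_trans ?_ hx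
  gcongr with m
  exact hyx m

lemma div_exp_one_le_measureReal_pos {Ω : Type*} [MeasurableSpace Ω] {μ : Measure Ω}
    [IsFiniteMeasure μ] {Z : Ω → ℕ} {θ : ℝ} (hθ0 : 0 ≤ θ) (hθ1 : θ ≤ 1)
    (hZ : μ {ω | Z ω = 1} = ENNReal.ofReal (exp (-θ) * θ)) :
    θ / exp 1 ≤ μ.real {ω | 0 < Z ω} :=
  calc θ / exp 1 = exp (-1) * θ := by rw [exp_neg, div_eq_inv_mul]
    _ ≤ exp (-θ) * θ := by gcongr
    _ = μ.real {ω | Z ω = 1} := by rw [measureReal_def, hZ, ENNReal.toReal_ofReal (by positivity)]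
    _ ≤ μ.real {ω | 0 < Z ω} := measureReal_mono fun ω (h : Z ω = 1) => by simp [h]

lemma measureReal_card_filter_pos_le {Ω ι : Type*} [MeasurableSpace Ω] {μ : Measure Ω}
    {Y : ι → Ω → ℕ} (hmeas : ∀ i, Measurable (Y i)) (hindep : iIndepFun Y μ)
    {θ : ℝ} (hθ0 : 0 ≤ θ) (hθ1 : θ ≤ 1)
    (hY : ∀ i, μ {ω | Y i ω = 1} = ENNReal.ofReal (exp (-θ) * θ)) (S : Finset ι) :
    μ.real {ω | (#(S.filter (0 < Y · ω)) : ℝ) ≤ θ * #S / (2 * exp 1)}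
      ≤ exp (-(θ ^ 2 * #S / (2 * exp 1 ^ 2))) := by
  have := hindep.isProbabilityMeasure
  set W : ι → Ω → ℝ := fun i ω => if 0 < Y i ω then 1 else 0 with hW
  have hW_meas (i : ι) : Measurable (W i) :=
    Measurable.ite (measurableSet_lt measurable_const (hmeas i)) measurable_const measurable_const
  have hW_indep : iIndepFun W μ :=
    hindep.comp (fun _ k => if 0 < k then (1 : ℝ) else 0) fun _ => measurable_from_top
  have hW_mean (i : ι) : θ / exp 1 ≤ μ[W i] := by
    rw [show W i = {ω | 0 < Y i ω}.indicator 1 by ext ω; simp [hW, Set.indicator_apply],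
      integral_indicator_one (measurableSet_lt measurable_const (hmeas i))]
    exact div_exp_one_le_measureReal_pos hθ0 hθ1 (hY i)
  set t := θ * #S / (2 * exp 1)
  calc μ.real {ω | (#(S.filter (0 < Y · ω)) : ℝ) ≤ t}
      ≤ μ.real {ω | ∑ i ∈ S, W i ω ≤ ∑ i ∈ S, μ[W i] - t} := by
        refine measureReal_mono (Set.ofPred_subset_ofPred.2 fun ω hω => ?_)
        have hcount : (#(S.filter (0 < Y · ω)) : ℝ) = ∑ i ∈ S, W i ω := natCast_card_filter _ _
        have hmean : 2 * t ≤ ∑ i ∈ S, μ[W i] :=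
          calc 2 * t = ∑ i ∈ S, θ / exp 1 := by
                simp only [t, sum_const, nsmul_eq_mul]
                field_simp
            _ ≤ ∑ i ∈ S, μ[W i] := sum_le_sum fun i _ => hW_mean i
        linarith
    _ ≤ exp (-2 * t ^ 2 / (#S * (1 - 0) ^ 2)) :=
        measureReal_sum_le_sub_le_of_iIndepFun hW_indep hW_meas
          (fun i ω => by by_cases h : 0 < Y i ω <;> simp [hW, h]) S (by positivity)
    _ = exp (-(θ ^ 2 * #S / (2 * exp 1 ^ 2))) := by
        -- for `S = ∅` both exponents vanish, the left one through division by zero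
        rcases eq_or_ne (#S : ℝ) 0 with hS | hS
        · simp [t, hS]
        · congr 1
          simp only [t]
          field_simp
          ring

theorem stmt_13_general {Ω : Type*} [MeasurableSpace Ω] (μ : Measure Ω)
    (n : ℕ) (θ : ℝ) (hθ0 : 0 ≤ θ) (hθ1 : θ ≤ 1)
    (X Y : Fin n → Ω → ℕ) (hmeas : ∀ i, Measurable (Y i))
    (hindep : iIndepFun Y μ)
    (hY : ∀ i (k : ℕ), μ {ω | Y i ω = k}
      = ENNReal.ofReal (Real.exp (-θ) * θ ^ k / (k.factorial : ℝ)))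
    (hcomp : ∀ S : Set (Fin n → ℕ),
      (∀ x ∈ S, ∀ y : Fin n → ℕ, (∀ i, y i ≤ x i) → y ∈ S) →
      μ {ω | (fun m => X m ω) ∈ S} ≤ 2 * μ {ω | (fun m => Y m ω) ∈ S})
    (S : Finset (Fin n)) :
    μ {ω | ((S.filter fun m => 0 < X m ω).card : ℝ) ≤ θ * (S.card : ℝ) / (2 * Real.exp 1)}
      ≤ ENNReal.ofReal
          (2 * Real.exp (-(θ ^ 2 * (S.card : ℝ) / (2 * Real.exp 1 ^ 2)))) := by
  have := hindep.isProbabilityMeasure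
  have hY1 (i : Fin n) : μ {ω | Y i ω = 1} = ENNReal.ofReal (exp (-θ) * θ) := by
    simpa using hY i 1
  calc μ {ω | ((S.filter fun m => 0 < X m ω).card : ℝ) ≤ θ * S.card / (2 * exp 1)}
      ≤ 2 * μ {ω | ((S.filter fun m => 0 < Y m ω).card : ℝ) ≤ θ * S.card / (2 * exp 1)} :=
        hcomp _ fun x hx y hyx => isLowerSet_setOf_card_filter_pos_le S _ hyx hx
    _ = 2 * ENNReal.ofReal
          (μ.real {ω | ((S.filter fun m => 0 < Y m ω).card : ℝ) ≤ θ * S.card / (2 * exp 1)}) := by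
        rw [ofReal_measureReal]
    _ ≤ 2 * ENNReal.ofReal (exp (-(θ ^ 2 * S.card / (2 * exp 1 ^ 2)))) := by
        gcongr
        exact measureReal_card_filter_pos_le hmeas hindep hθ0 hθ1 hY1 S
    _ = ENNReal.ofReal (2 * exp (-(θ ^ 2 * S.card / (2 * exp 1 ^ 2)))) := by
        rw [ENNReal.ofReal_mul zero_le_two, ENNReal.ofReal_ofNat]

/-- Lemma 3 of the paper: saturation without retry.  With `X` the
occupancy vector satisfying the Poisson comparison inequality against i.i.d.
Poisson(θ) variables `Y`, the number of nonempty bins of `S` is at least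
`θ|S|/(2e)` except with probability `2 exp(−θ²|S|/(2e²))`. -/
theorem stmt_13 {Ω : Type*} [MeasurableSpace Ω] (μ : Measure Ω) [IsProbabilityMeasure μ]
    (n : ℕ) (θ : ℝ) (hθ0 : 0 ≤ θ) (hθ1 : θ ≤ 1)
    (X Y : Fin n → Ω → ℕ) (hmeas : ∀ i, Measurable (Y i))
    (hindep : iIndepFun Y μ)
    (hY : ∀ i (k : ℕ), μ {ω | Y i ω = k}
      = ENNReal.ofReal (Real.exp (-θ) * θ ^ k / (k.factorial : ℝ)))
    (hcomp : ∀ S : Set (Fin n → ℕ),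
      (∀ x ∈ S, ∀ y : Fin n → ℕ, (∀ i, y i ≤ x i) → y ∈ S) →
      μ {ω | (fun m => X m ω) ∈ S} ≤ 2 * μ {ω | (fun m => Y m ω) ∈ S})
    (S : Finset (Fin n)) :
    μ {ω | ((S.filter fun m => 0 < X m ω).card : ℝ) ≤ θ * (S.card : ℝ) / (2 * Real.exp 1)}
      ≤ ENNReal.ofReal
          (2 * Real.exp (-(θ ^ 2 * (S.card : ℝ) / (2 * Real.exp 1 ^ 2)))) :=
  stmt_13_general μ n θ hθ0 hθ1 X Y hmeas hindep hY hcomp S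
end

section
/- For all sufficiently large n, with ℓ = ⌊√(2 log n / log log n)⌋, ε ∈ (0,1), ρ > 0, ζ = ρ/(8eℓ), a = ⌈(2−ε)ℓ⌉ − k for some 1 ≤ k ≤ 2ℓ with a ≥ 1: ζ^{(k+1)(a+1)} · n / (e · a^a) ≥ n^{ε/3}. In particular exp(−ζ^{(k+1)(a+1)} n / (e a^a)) ≤ exp(−n^{ε/3}). -/
/-!
Write `L = log n`, `λ = log L` and `M = (k+1)(a+1)`. Taking logarithms, the claim is
`M (log ℓ + log (8e/ρ)) + 1 + a log a ≤ (1 - ε/3) L`. Since `a + k ≤ (2-ε)ℓ`, AM-GM gives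
`M ≤ (1 - ε/2) ℓ²`, and `ℓ² ≤ 2L/λ` gives `log ℓ ≤ (λ + 1)/2`, so the first term is at most
`(1 - ε/2) (L + O(L/λ))`. Also `a log a ≤ a² ≤ 4ℓ² ≤ 8L/λ`. Once `λ` is large compared with
`1/ε` and `log (8e/ρ)`, each error term is at most `εL/18`, which leaves the margin `εL/3`.
-/

open Real Filter Topology

lemma tendsto_div_log_atTop : Tendsto (fun x : ℝ => x / log x) atTop atTop := by
  have h : Tendsto (fun x : ℝ => log x / x) atTop (𝓝[>] 0) := by
    refine tendsto_nhdsWithin_iff.2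
      ⟨by simpa using tendsto_pow_log_div_mul_add_atTop 1 0 1 one_ne_zero, ?_⟩
    filter_upwards [eventually_gt_atTop 1] with x hx
    exact div_pos (log_pos hx) (by linarith)
  exact h.inv_tendsto_nhdsGT_zero.congr fun x => inv_div _ _

/-- The paper's `ℓ` as a function of `L = log n`. -/
noncomputable def ell (L : ℝ) : ℕ := ⌊√(2 * L / log L)⌋₊

lemma tendsto_ell_atTop : Tendsto (fun L => (ell L : ℝ)) atTop atTop :=
  tendsto_natCast_atTop_atTop.comp <| tendsto_nat_floor_atTop.comp <|
    tendsto_sqrt_atTop.comp <| by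
      simpa only [mul_div_assoc] using tendsto_div_log_atTop.const_mul_atTop two_pos

lemma ell_sq_le {L : ℝ} (hL : 1 ≤ L) : (ell L : ℝ) ^ 2 ≤ 2 * L / log L := by
  have h0 : 0 ≤ 2 * L / log L := div_nonneg (by linarith) (log_nonneg hL)
  calc (ell L : ℝ) ^ 2 ≤ √(2 * L / log L) ^ 2 := by
        gcongr; exact Nat.floor_le (sqrt_nonneg _)
    _ = 2 * L / log L := sq_sqrt h0

lemma eventually_one_le_and_le_log_and_le_ell (A B : ℝ) :
    ∀ᶠ L in atTop, 1 ≤ L ∧ A ≤ log L ∧ B ≤ ell L :=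
  (eventually_ge_atTop 1).and <|
    (tendsto_log_atTop.eventually_ge_atTop A).and (tendsto_ell_atTop.eventually_ge_atTop B)

lemma cast_add_lt_of_eq_ceil_sub {x : ℝ} (hx : 0 ≤ x) {a k : ℕ} (ha : a = ⌈x⌉₊ - k)
    (ha1 : 1 ≤ a) : (a : ℝ) + k < x + 1 := by
  have : a + k = ⌈x⌉₊ := by omega
  exact_mod_cast this ▸ Nat.ceil_lt_add_one hx

lemma succ_mul_succ_le {ε ℓ x y : ℝ} (hε0 : 0 < ε) (hε1 : ε < 1) (hx : 0 ≤ x) (hy : 0 ≤ y)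
    (hxy : x + y < (2 - ε) * ℓ + 1) (hℓ : 24 ≤ ε * ℓ) :
    (x + 1) * (y + 1) ≤ (1 - ε / 2) * ℓ ^ 2 := by
  have hℓ24 : 24 ≤ ℓ := by nlinarith
  have hlin := mul_le_mul_of_nonneg_right hℓ (by nlinarith : 0 ≤ (2 - ε) * ℓ)
  calc (x + 1) * (y + 1) ≤ (((2 - ε) * ℓ + 3) / 2) ^ 2 := by nlinarith [sq_nonneg (x - y)]
    _ ≤ (1 - ε / 2) * ℓ ^ 2 := by nlinarith

lemma sq_mul_log_add_le {ℓ L C : ℝ} (hℓ : 1 ≤ ℓ) (hC : 0 ≤ C) (hL : 1 ≤ log L)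
    (hsq : ℓ ^ 2 ≤ 2 * L / log L) : ℓ ^ 2 * (log ℓ + C) ≤ L + (1 + 2 * C) * L / log L := by
  have hL0 : 0 < L := by
    have h := (by positivity : (0:ℝ) < ℓ ^ 2).trans_le hsq
    rw [div_pos_iff_of_pos_right (by linarith)] at h
    linarith
  have hlogℓ : log ℓ ≤ (log L + 1) / 2 := by
    have h := log_le_log (by positivity) hsq
    rw [log_pow, log_div (by positivity) (by positivity), log_mul two_ne_zero hL0.ne'] at h
    push_cast at h
    linarith [log_nonneg hL, log_two_lt_d9]
  calc ℓ ^ 2 * (log ℓ + C) ≤ 2 * L / log L * ((log L + 1) / 2 + C) := by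
        gcongr
        exact add_nonneg (log_nonneg hℓ) hC
    _ = L + (1 + 2 * C) * L / log L := by field_simp; ring

lemma succ_mul_succ_mul_log_add_le {ε c L : ℝ} {ℓ k a : ℕ} (hε0 : 0 < ε) (hε1 : ε < 1)
    (hL0 : 0 < L) (hL : 144 * (1 + |c|) ≤ ε * log L) (hsq : (ℓ : ℝ) ^ 2 ≤ 2 * L / log L)
    (hℓ : 24 ≤ ε * ℓ) (hak : (a : ℝ) + k < (2 - ε) * ℓ + 1) (hk : 1 ≤ k) :
    (((k + 1) * (a + 1) : ℕ) : ℝ) * (log ℓ + c) + 1 + a * log a ≤ (1 - ε / 3) * L := by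
  have hc := abs_nonneg c
  have hlogL : 144 ≤ log L := by nlinarith
  have hℓ1 : (1 : ℝ) ≤ ℓ := by nlinarith
  have hk1 : (1 : ℝ) ≤ k := by exact_mod_cast hk
  have hM := succ_mul_succ_le hε0 hε1 k.cast_nonneg a.cast_nonneg (by linarith) hℓ
  have hmain := sq_mul_log_add_le hℓ1 hc (by linarith) hsq
  have hrem : (1 + 2 * |c|) * L / log L ≤ ε / 18 * L := by
    rw [div_le_iff₀ (by linarith)]; nlinarith
  have ha : (a : ℝ) * log a ≤ ε / 18 * L := calc
    (a : ℝ) * log a ≤ a * a := by gcongr; exact log_le_self a.cast_nonneg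
    _ ≤ 2 * ℓ * (2 * ℓ) := by gcongr <;> linarith
    _ ≤ 4 * (2 * L / log L) := by linarith
    _ ≤ ε / 18 * L := by rw [← mul_div_assoc, div_le_iff₀ (by linarith)]; nlinarith
  have hone : 1 ≤ ε / 18 * L := by nlinarith [log_le_sub_one_of_pos hL0]
  have hlead : ((k + 1) * (a + 1) : ℝ) * (log ℓ + c)
      ≤ (1 - ε / 2) * (ℓ ^ 2 * (log ℓ + |c|)) := by
    rw [← mul_assoc]
    calc ((k + 1) * (a + 1) : ℝ) * (log ℓ + c) ≤ ((k + 1) * (a + 1) : ℝ) * (log ℓ + |c|) := by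
          gcongr; exact le_abs_self c
      _ ≤ _ := mul_le_mul_of_nonneg_right hM (add_nonneg (log_nonneg hℓ1) hc)
  have hbody := mul_le_mul_of_nonneg_left (hmain.trans (add_le_add_right hrem L))
    (by linarith : 0 ≤ 1 - ε / 2)
  push_cast
  calc ((k + 1) * (a + 1) : ℝ) * (log ℓ + c) + 1 + a * log a
      ≤ (1 - ε / 2) * (L + ε / 18 * L) + ε / 18 * L + ε / 18 * L := by linarith
    _ ≤ (1 - ε / 3) * L := by nlinarith

lemma rpow_le_pow_mul_div_of_log_le {ε ρ : ℝ} (hρ : 0 < ρ) {n ℓ a M : ℕ} (hn : 0 < n)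
    (hℓ : 0 < ℓ) (ha : 0 < a)
    (h : M * (log ℓ + log (8 * exp 1 / ρ)) + 1 + a * log a ≤ (1 - ε / 3) * log n) :
    (n : ℝ) ^ (ε / 3) ≤ (ρ / (8 * exp 1 * ℓ)) ^ M * n / (exp 1 * (a : ℝ) ^ a) := by
  have hζ : log (ρ / (8 * exp 1 * ℓ)) = -(log ℓ + log (8 * exp 1 / ρ)) := by
    rw [log_div (by positivity) (by positivity), log_div (by positivity) (by positivity),
      log_mul (by positivity) (by positivity)]
    ring
  rw [rpow_le_iff_le_log (by positivity) (by positivity), log_div (by positivity) (by positivity),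
    log_mul (by positivity) (by positivity), log_mul (by positivity) (by positivity), log_pow,
    log_pow, log_exp, hζ]
  linarith

/-- the key quantitative estimate in the one-step lemma:
`ζ^{(k+1)(a+1)} n / (e a^a) ≥ n^{ε/3}` for large `n`, where
`ℓ = ⌊√(2 log n / log log n)⌋`, `ζ = ρ/(8eℓ)` and `a = ⌈(2−ε)ℓ⌉ − k`. -/
theorem stmt_16 (ε ρ : ℝ) (hε0 : 0 < ε) (hε1 : ε < 1) (hρ : 0 < ρ) :
    ∃ N : ℕ, ∀ n : ℕ, N ≤ n →
    ∀ ℓ : ℕ, ℓ = ⌊Real.sqrt (2 * Real.log n / Real.log (Real.log n))⌋₊ →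
    ∀ ζ : ℝ, ζ = ρ / (8 * Real.exp 1 * (ℓ : ℝ)) →
    ∀ k : ℕ, 1 ≤ k → k ≤ 2 * ℓ →
    ∀ a : ℕ, a = ⌈(2 - ε) * (ℓ : ℝ)⌉₊ - k → 1 ≤ a →
      ((n : ℝ) ^ (ε / 3)
          ≤ ζ ^ ((k + 1) * (a + 1)) * (n : ℝ) / (Real.exp 1 * (a : ℝ) ^ a))
      ∧ Real.exp (-(ζ ^ ((k + 1) * (a + 1)) * (n : ℝ) / (Real.exp 1 * (a : ℝ) ^ a)))
          ≤ Real.exp (-((n : ℝ) ^ (ε / 3))) := by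
  have hlarge := (tendsto_log_atTop.comp tendsto_natCast_atTop_atTop).eventually
    (eventually_one_le_and_le_log_and_le_ell (144 * (1 + |log (8 * exp 1 / ρ)|) / ε) (24 / ε))
  obtain ⟨N, hN⟩ := eventually_atTop.1 (hlarge.and (eventually_gt_atTop 0))
  refine ⟨N, fun n hn ℓ hℓ ζ hζ k hk _ a ha ha1 => ?_⟩
  obtain ⟨⟨hL1, hL, hℓε⟩, hn0⟩ := hN n hn
  replace hℓ : ℓ = ell (log n) := hℓ
  subst hℓ hζ
  simp only [Function.comp_apply] at hL1 hL hℓε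
  have hℓ0 : 0 < ell (log n) := Nat.cast_pos.1 ((by positivity : (0 : ℝ) < 24 / ε).trans_le hℓε)
  rw [div_le_iff₀' hε0] at hL hℓε
  have hak := cast_add_lt_of_eq_ceil_sub (by nlinarith) ha ha1
  have h := rpow_le_pow_mul_div_of_log_le hρ hn0 hℓ0 ha1
    (succ_mul_succ_mul_log_add_le hε0 hε1 (by linarith) hL (ell_sq_le hL1) hℓε hak hk)
  exact ⟨h, exp_le_exp.2 (neg_le_neg h)⟩
end
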